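/- Let {A_n} be a sequence of matrices with A_n of size d_n, d_n → ∞, and suppose A_n = R_n + N_n with rank(R_n)/d_n → 0 and ‖N_n‖ → 0 (spectral norm). Then for every continuous compactly supported F : ℝ → ℝ, (1/d_n) ∑_{i=1}^{d_n} F(σ_i(A_n)) → F(0). -/

import Mathlib

open Matrix
open scoped ComplexOrder Classical

/-- Square root of a matrix: the unique PSD square root when `M` is positive
semidefinite, junk value `0` otherwise. -/
noncomputable def msqrt {m : Type*} [Fintype m] [DecidableEq m] (M : Matrix m m ℂ) :
    Matrix m m ℂ :=
  if h : M.PosSemidef then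
    (h.1.eigenvectorUnitary : Matrix m m ℂ) * diagonal ((↑) ∘ (h.1.eigenvalues · |>.sqrt)) *
      (star h.1.eigenvectorUnitary : Matrix m m ℂ)
  else 0

/-- The matrix geometric mean `G(A,B) = A^{1/2} (A^{-1/2} B A^{-1/2})^{1/2} A^{1/2}`. -/
noncomputable def matGM {m : Type*} [Fintype m] [DecidableEq m] (A B : Matrix m m ℂ) :
    Matrix m m ℂ :=
  msqrt A * msqrt ((msqrt A)⁻¹ * B * (msqrt A)⁻¹) * msqrt A

/-- Singular values of a square complex matrix: the eigenvalues of `(MᴴM)^{1/2}`. -/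
noncomputable def singVals {m : Type*} [Fintype m] [DecidableEq m] (M : Matrix m m ℂ) :
    m → ℝ :=
  if h : (msqrt (Mᴴ * M)).IsHermitian then h.eigenvalues else 0

/-- Spectral (operator) norm of a square complex matrix: the largest singular value. -/
noncomputable def specNorm {m : Type*} [Fintype m] [DecidableEq m] (M : Matrix m m ℂ) : ℝ :=
  ⨆ i, singVals M i

/-- Schatten `p`-norm: the `ℓ^p` norm of the vector of singular values. -/
noncomputable def schattenNorm {m : Type*} [Fintype m] [DecidableEq m] (p : ℝ)
    (M : Matrix m m ℂ) : ℝ :=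
  (∑ i, singVals M i ^ p) ^ (1 / p)

/-! If `A = R + N`, at most `rank R` singular values of `A` exceed `‖N‖`: on the span of the
corresponding right singular vectors `‖A x‖ > ‖N‖ ‖x‖`, while on `ker R` we have
`‖A x‖ = ‖N x‖ ≤ ‖N‖ ‖x‖`, so a span of dimension larger than `rank R` would meet `ker R`
nontrivially. Hence all but a proportion `rank R_k / d_k → 0` of the singular values of `A_k` lie in
`[0, ‖N_k‖]`, where `F` is close to `F 0`, and the remaining ones contribute at most
`2 sup |F| · rank R_k / d_k` to the average. -/

open scoped InnerProductSpace

open Module Submodule LinearMap in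
theorem LinearIndependent.exists_mem_span_ne_zero_apply_eq_zero {K V W ι : Type*} [Field K]
    [AddCommGroup V] [Module K V] [AddCommGroup W] [Module K W] [FiniteDimensional K W]
    [Fintype ι] {v : ι → V} (hv : LinearIndependent K v) (f : V →ₗ[K] W)
    (h : finrank K (range f) < Fintype.card ι) :
    ∃ x ∈ span K (Set.range v), x ≠ 0 ∧ f x = 0 := by
  set g := f ∘ₗ Fintype.linearCombination K v
  have hg : finrank K (range g) < finrank K (ι → K) := by
    rw [finrank_fintype_fun_eq_card]
    exact (finrank_mono (range_comp_le_range _ _)).trans_lt h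
  obtain ⟨w, hw, hw₀⟩ :=
    (Submodule.ne_bot_iff _).mp (ker_rangeRestrict g ▸ ker_ne_bot_of_finrank_lt hg)
  refine ⟨Fintype.linearCombination K v w, ?_, ?_, hw⟩
  · exact Fintype.range_linearCombination K v ▸ mem_range_self _ w
  · exact (map_ne_zero_iff _ hv.fintypeLinearCombination_injective).mpr hw₀

namespace Matrix

section RCLike
variable {𝕜 m n : Type*} [RCLike 𝕜] [Fintype m] [Fintype n] [DecidableEq n]

lemma norm_toEuclideanLin_sq (A : Matrix m n 𝕜) (x : EuclideanSpace 𝕜 n) :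
    ‖toEuclideanLin A x‖ ^ 2 = RCLike.re ⟪x, toEuclideanLin (Aᴴ * A) x⟫_𝕜 := by
  rw [toLpLin_mul_same, LinearMap.comp_apply, toEuclideanLin_conjTranspose_eq_adjoint,
    LinearMap.adjoint_inner_right, inner_self_eq_norm_sq]

lemma norm_toEuclideanLin_eq_of_conjTranspose_mul_self_eq {A B : Matrix m n 𝕜}
    (h : Aᴴ * A = Bᴴ * B) (x : EuclideanSpace 𝕜 n) :
    ‖toEuclideanLin A x‖ = ‖toEuclideanLin B x‖ := by
  rw [← sq_eq_sq₀ (norm_nonneg _) (norm_nonneg _), norm_toEuclideanLin_sq,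
    norm_toEuclideanLin_sq, h]

namespace IsHermitian
variable {A : Matrix n n 𝕜}

lemma toEuclideanLin_eigenvectorBasis (hA : A.IsHermitian) (j : n) :
    toEuclideanLin A (hA.eigenvectorBasis j) = (hA.eigenvalues j : 𝕜) • hA.eigenvectorBasis j :=
  WithLp.ofLp_injective _ <| by
    rw [ofLp_toLpLin, WithLp.ofLp_smul, ← RCLike.real_smul_eq_coe_smul]
    exact hA.mulVec_eigenvectorBasis j

lemma inner_eigenvectorBasis_toEuclideanLin (hA : A.IsHermitian) (j : n)
    (x : EuclideanSpace 𝕜 n) :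
    ⟪hA.eigenvectorBasis j, toEuclideanLin A x⟫_𝕜 =
      hA.eigenvalues j * ⟪hA.eigenvectorBasis j, x⟫_𝕜 := by
  rw [← isSymmetric_toEuclideanLin_iff.mpr hA, toEuclideanLin_eigenvectorBasis, inner_smul_left,
    RCLike.conj_ofReal]

lemma norm_toEuclideanLin_sq_eq_sum (hA : A.IsHermitian) (x : EuclideanSpace 𝕜 n) :
    ‖toEuclideanLin A x‖ ^ 2 =
      ∑ j, hA.eigenvalues j ^ 2 * ‖⟪hA.eigenvectorBasis j, x⟫_𝕜‖ ^ 2 := by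
  rw [← hA.eigenvectorBasis.sum_sq_norm_inner_right (toEuclideanLin A x)]
  simp_rw [inner_eigenvectorBasis_toEuclideanLin, norm_mul, RCLike.norm_ofReal, mul_pow, sq_abs]

lemma norm_toEuclideanLin_sq_le (hA : A.IsHermitian) {c : ℝ} (hc : ∀ j, |hA.eigenvalues j| ≤ c)
    (x : EuclideanSpace 𝕜 n) : ‖toEuclideanLin A x‖ ^ 2 ≤ c ^ 2 * ‖x‖ ^ 2 := by
  rw [hA.norm_toEuclideanLin_sq_eq_sum, ← hA.eigenvectorBasis.sum_sq_norm_inner_right x,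
    Finset.mul_sum]
  refine Finset.sum_le_sum fun j _ => mul_le_mul_of_nonneg_right ?_ (by positivity)
  rw [← sq_abs]
  exact pow_le_pow_left₀ (abs_nonneg _) (hc j) 2

lemma sq_mul_norm_sq_lt_norm_toEuclideanLin_sq (hA : A.IsHermitian) {c : ℝ} (hc : 0 ≤ c)
    {x : EuclideanSpace 𝕜 n} (hx : x ≠ 0)
    (h : ∀ j, hA.eigenvalues j ≤ c → ⟪hA.eigenvectorBasis j, x⟫_𝕜 = 0) :
    c ^ 2 * ‖x‖ ^ 2 < ‖toEuclideanLin A x‖ ^ 2 := by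
  obtain ⟨j₀, hj₀⟩ : ∃ j, ⟪hA.eigenvectorBasis j, x⟫_𝕜 ≠ 0 := by
    by_contra! h₀
    apply hx
    rw [← norm_eq_zero, ← sq_eq_zero_iff, ← hA.eigenvectorBasis.sum_sq_norm_inner_right x]
    simp [h₀]
  rw [hA.norm_toEuclideanLin_sq_eq_sum, ← hA.eigenvectorBasis.sum_sq_norm_inner_right x,
    Finset.mul_sum]
  refine Finset.sum_lt_sum (fun j _ => ?_) ⟨j₀, Finset.mem_univ _, ?_⟩
  · by_cases hj : hA.eigenvalues j ≤ c
    · simp [h j hj]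
    · gcongr
      exact (not_le.mp hj).le
  · have hlt : c < hA.eigenvalues j₀ := not_le.mp fun hle => hj₀ (h j₀ hle)
    gcongr

end IsHermitian
end RCLike
end Matrix

section SingularValues

variable {m : Type*} [Fintype m] [DecidableEq m]

lemma msqrt_eq_cfc {M : Matrix m m ℂ} (hM : M.PosSemidef) : msqrt M = cfc Real.sqrt M := by
  rw [msqrt, dif_pos hM, hM.1.cfc_eq, IsHermitian.cfc, Unitary.conjStarAlgAut_apply]
  rfl

lemma isHermitian_msqrt (M : Matrix m m ℂ) : (msqrt M).IsHermitian := by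
  by_cases hM : M.PosSemidef
  · rw [msqrt_eq_cfc hM]
    exact cfc_predicate Real.sqrt M
  · rw [msqrt, dif_neg hM]
    exact isHermitian_zero

lemma msqrt_mul_self {M : Matrix m m ℂ} (hM : M.PosSemidef) : msqrt M * msqrt M = M := by
  have hspec : ∀ t ∈ spectrum ℝ M, 0 ≤ t := by
    rw [hM.1.spectrum_real_eq_range_eigenvalues]
    rintro - ⟨i, rfl⟩
    exact hM.eigenvalues_nonneg i
  rw [msqrt_eq_cfc hM, ← cfc_mul Real.sqrt Real.sqrt M]
  conv_rhs => rw [← cfc_id' ℝ M hM.1]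
  exact cfc_congr fun t ht => Real.mul_self_sqrt (hspec t ht)

lemma singVals_eq (M : Matrix m m ℂ) (h : (msqrt (Mᴴ * M)).IsHermitian) :
    singVals M = h.eigenvalues :=
  dif_pos h

lemma singVals_nonneg (M : Matrix m m ℂ) (i : m) : 0 ≤ singVals M i := by
  have hi := (isHermitian_msqrt (Mᴴ * M)).eigenvalues_mem_spectrum_real i
  have hP := posSemidef_conjTranspose_mul_self M
  have hspec : spectrum ℝ (msqrt (Mᴴ * M)) = Real.sqrt '' spectrum ℝ (Mᴴ * M) := by
    rw [msqrt_eq_cfc hP]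
    exact cfc_map_spectrum Real.sqrt _ hP.1
  rw [hspec] at hi
  obtain ⟨t, -, ht⟩ := hi
  rw [singVals_eq M (isHermitian_msqrt _), ← ht]
  exact Real.sqrt_nonneg t

noncomputable def rightSingVecs (M : Matrix m m ℂ) : OrthonormalBasis m ℂ (EuclideanSpace ℂ m) :=
  (isHermitian_msqrt (Mᴴ * M)).eigenvectorBasis

lemma specNorm_nonneg (M : Matrix m m ℂ) : 0 ≤ specNorm M :=
  Real.iSup_nonneg (singVals_nonneg M)

lemma norm_toEuclideanLin_eq_msqrt (M : Matrix m m ℂ) (x : EuclideanSpace ℂ m) :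
    ‖toEuclideanLin M x‖ = ‖toEuclideanLin (msqrt (Mᴴ * M)) x‖ := by
  refine norm_toEuclideanLin_eq_of_conjTranspose_mul_self_eq ?_ x
  rw [(isHermitian_msqrt _).eq, msqrt_mul_self (posSemidef_conjTranspose_mul_self M)]

lemma norm_toEuclideanLin_le_specNorm (M : Matrix m m ℂ) (x : EuclideanSpace ℂ m) :
    ‖toEuclideanLin M x‖ ≤ specNorm M * ‖x‖ := by
  have hS := isHermitian_msqrt (Mᴴ * M)
  have hbound : ∀ j, |hS.eigenvalues j| ≤ specNorm M := fun j => by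
    rw [← singVals_eq M hS, abs_of_nonneg (singVals_nonneg M j)]
    exact le_ciSup (Set.finite_range _).bddAbove j
  rw [norm_toEuclideanLin_eq_msqrt, ← pow_le_pow_iff_left₀ (norm_nonneg _)
    (mul_nonneg (specNorm_nonneg M) (norm_nonneg x)) two_ne_zero, mul_pow]
  exact hS.norm_toEuclideanLin_sq_le hbound x

lemma mul_norm_lt_norm_toEuclideanLin (M : Matrix m m ℂ) {c : ℝ} (hc : 0 ≤ c)
    {x : EuclideanSpace ℂ m} (hx : x ≠ 0)
    (h : ∀ j, singVals M j ≤ c → ⟪rightSingVecs M j, x⟫_ℂ = 0) :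
    c * ‖x‖ < ‖toEuclideanLin M x‖ := by
  have hS := isHermitian_msqrt (Mᴴ * M)
  rw [singVals_eq M hS] at h
  rw [norm_toEuclideanLin_eq_msqrt, ← pow_lt_pow_iff_left₀ (mul_nonneg hc (norm_nonneg x))
    (norm_nonneg _) two_ne_zero, mul_pow]
  exact hS.sq_mul_norm_sq_lt_norm_toEuclideanLin_sq hc hx h

open Finset in
theorem card_specNorm_lt_singVals_le_rank {A R N : Matrix m m ℂ} (h : A = R + N) :
    #{i | specNorm N < singVals A i} ≤ R.rank := by
  by_contra! hrank
  set T := ({i | specNorm N < singVals A i} : Finset m)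
  set b := rightSingVecs A
  have hindep := b.orthonormal.linearIndependent.comp ((↑) : T → m) Subtype.val_injective
  obtain ⟨x, hx, hx₀, hRx⟩ := hindep.exists_mem_span_ne_zero_apply_eq_zero
    (R.mulVecLin ∘ₗ (WithLp.linearEquiv 2 ℂ (m → ℂ)).toLinearMap)
    (by rwa [LinearMap.range_comp_of_range_eq_top _ (LinearEquiv.range _), Fintype.card_coe])
  have hAx : toEuclideanLin A x = toEuclideanLin N x := by
    have hRx : R *ᵥ WithLp.ofLp x = 0 := hRx
    apply WithLp.ofLp_injective
    rw [ofLp_toLpLin, ofLp_toLpLin, toLin'_apply, toLin'_apply, h, add_mulVec, hRx, zero_add]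
  have horth : ∀ j, singVals A j ≤ specNorm N → ⟪b j, x⟫_ℂ = 0 := fun j hj => by
    refine (Submodule.span_le (p := LinearMap.ker (innerₛₗ ℂ (b j)))).mpr ?_ hx
    rintro - ⟨i, rfl⟩
    refine b.inner_eq_zero fun hji => ?_
    have hi := (mem_filter.mp i.2).2
    subst hji
    linarith
  have hlt := mul_norm_lt_norm_toEuclideanLin A (specNorm_nonneg N) hx₀ horth
  rw [hAx] at hlt
  exact (norm_toEuclideanLin_le_specNorm N x).not_gt hlt

end SingularValues

open Finset in
theorem abs_average_sub_le {ι : Type*} [Fintype ι] [Nonempty ι] {F : ℝ → ℝ} {C : ℝ}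
    (hC : ∀ t, |F t| ≤ C) {s : ι → ℝ} {c η : ℝ} (hη₀ : 0 ≤ η)
    (hη : ∀ i, s i ≤ c → |F (s i) - F 0| ≤ η) :
    |1 / (Fintype.card ι : ℝ) * ∑ i, F (s i) - F 0|
      ≤ #{i | c < s i} / Fintype.card ι * (2 * C) + η := by
  set n : ℝ := (Fintype.card ι : ℝ)
  have hn : 0 < n := Nat.cast_pos.mpr Fintype.card_pos
  have hlarge : ∑ i with c < s i, |F (s i) - F 0| ≤ #{i | c < s i} * (2 * C) := by
    rw [← nsmul_eq_mul]
    refine sum_le_card_nsmul _ _ _ fun i _ => (abs_sub _ _).trans ?_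
    linarith [hC (s i), hC 0]
  have hsmall : ∑ i with ¬c < s i, |F (s i) - F 0| ≤ n * η := by
    calc ∑ i with ¬c < s i, |F (s i) - F 0| ≤ #{i | ¬c < s i} * η := by
          rw [← nsmul_eq_mul]
          exact sum_le_card_nsmul _ _ _ fun i hi => hη i (not_lt.mp (mem_filter.mp hi).2)
      _ ≤ n * η := by
          gcongr
          exact Nat.cast_le.mpr (card_le_univ _)
  calc |1 / n * ∑ i, F (s i) - F 0| = |1 / n * ∑ i, (F (s i) - F 0)| := by
        rw [sum_sub_distrib, sum_const, card_univ, nsmul_eq_mul, mul_sub, ← mul_assoc,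
          one_div_mul_cancel hn.ne', one_mul]
    _ ≤ 1 / n * ∑ i, |F (s i) - F 0| := by
        rw [abs_mul, abs_of_pos (one_div_pos.mpr hn)]
        gcongr
        exact abs_sum_le_sum_abs _ _
    _ ≤ 1 / n * (#{i | c < s i} * (2 * C) + n * η) := by
        rw [← sum_filter_add_sum_filter_not univ (fun i => c < s i)]
        gcongr
    _ = #{i | c < s i} / n * (2 * C) + η := by
        field_simp

open Filter Topology Finset in
theorem tendsto_average_of_tendsto_card_gt {α : Type*} {l : Filter α} {ι : α → Type*}
    [∀ a, Fintype (ι a)] {s : ∀ a, ι a → ℝ} (hs : ∀ a i, 0 ≤ s a i) {c : α → ℝ}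
    (hc : Tendsto c l (𝓝 0))
    (hcard : Tendsto (fun a => (#{i | c a < s a i} : ℝ) / Fintype.card (ι a)) l (𝓝 0))
    (hne : ∀ᶠ a in l, Nonempty (ι a)) {F : ℝ → ℝ} {C : ℝ} (hC : ∀ t, |F t| ≤ C)
    (hF : ContinuousAt F 0) :
    Tendsto (fun a => 1 / (Fintype.card (ι a) : ℝ) * ∑ i, F (s a i)) l (𝓝 (F 0)) := by
  rw [Metric.tendsto_nhds]
  intro δ hδ
  obtain ⟨ε, hε, hFε⟩ := Metric.continuousAt_iff.mp hF (δ / 2) (half_pos hδ)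
  have hlarge : Tendsto (fun a => (#{i | c a < s a i} : ℝ) / Fintype.card (ι a) * (2 * C)) l
      (𝓝 0) := by
    simpa using hcard.mul_const (2 * C)
  filter_upwards [hc.eventually (gt_mem_nhds hε), hlarge.eventually (gt_mem_nhds (half_pos hδ)),
    hne] with a hca hcount hnea
  rw [Real.dist_eq]
  refine (abs_average_sub_le (c := c a) hC (half_pos hδ).le fun i hi => ?_).trans_lt (by linarith)
  have hsi : dist (s a i) 0 < ε := by
    rw [Real.dist_eq, sub_zero, abs_of_nonneg (hs a i)]
    linarith
  exact (hFε hsi).le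

open Filter in
theorem stmt11 {d : ℕ → ℕ} (hd : StrictMono d)
    (A R N : ∀ k, Matrix (Fin (d k)) (Fin (d k)) ℂ)
    (hsum : ∀ k, A k = R k + N k)
    (hR : Tendsto (fun k => ((R k).rank : ℝ) / (d k : ℝ)) atTop (nhds 0))
    (hN : Tendsto (fun k => specNorm (N k)) atTop (nhds 0)) :
    ∀ F : ℝ → ℝ, Continuous F → HasCompactSupport F →
      Tendsto (fun k => (1 / (d k : ℝ)) * ∑ i, F (singVals (A k) i)) atTop (nhds (F 0)) := by
  intro F hF hFs
  obtain ⟨C, hC⟩ := hF.bounded_above_of_compact_support hFs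
  open Finset in
  have hcard : Tendsto (fun k => (#{i | specNorm (N k) < singVals (A k) i} : ℝ) / d k) atTop
      (nhds 0) :=
    squeeze_zero (fun k => by positivity)
      (fun k => by gcongr; exact_mod_cast card_specNorm_lt_singVals_le_rank (hsum k)) hR
  have hne : ∀ᶠ k in atTop, Nonempty (Fin (d k)) :=
    (hd.tendsto_atTop.eventually_ge_atTop 1).mono fun k hk => Fin.pos_iff_nonempty.mp hk
  simpa only [Fintype.card_fin] using
    tendsto_average_of_tendsto_card_gt (fun k => singVals_nonneg (A k)) hN
      (by simpa only [Fintype.card_fin] using hcard) hne hC hF.continuousAt
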